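/- Let G be a countable group, K a subgroup of G, and π a unitary representation of G on a complex Hilbert space H. Let η be a Parseval frame vector for H, let q' be an orthogonal projection on H commuting with π(g) for all g ∈ G, and set η₁ := q'η. If {π(h)η₁ : h ∈ K} is a Riesz sequence, then {π(h)η : h ∈ K} is a Riesz sequence. -/

import Mathlib

noncomputable section

open scoped ComplexConjugate

local notation "⟪" x ", " y "⟫" => @inner ℂ _ _ x y

/-- A group is ICC if every nontrivial conjugacy class is infinite. -/
def IsICC (G : Type*) [Group G] : Prop :=
  ∀ g : G, g ≠ 1 → {x : G | ∃ h : G, x = h * g * h⁻¹}.Infinite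

variable {G : Type*} [Group G]
variable {H : Type*} [NormedAddCommGroup H] [InnerProductSpace ℂ H]

/-- `ξ` is a Parseval frame vector for the whole space `H`. -/
def IsParsevalFrameVector (π : G →* (H ≃ₗᵢ[ℂ] H)) (ξ : H) : Prop :=
  ∀ f : H, ∑' g : G, ‖⟪f, π g ξ⟫‖ ^ 2 = ‖f‖ ^ 2

/-- `ξ` is a Parseval frame vector for the (closed) subspace `M` of `H`. -/
def IsParsevalFrameVectorIn (π : G →* (H ≃ₗᵢ[ℂ] H)) (ξ : H) (M : Submodule ℂ H) : Prop :=
  (∀ g : G, π g ξ ∈ M) ∧ ∀ f ∈ M, ∑' g : G, ‖⟪f, π g ξ⟫‖ ^ 2 = ‖f‖ ^ 2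

/-- The closed linear span of the orbit `{π(g)ξ : g ∈ G}`. -/
def orbitSpan (π : G →* (H ≃ₗᵢ[ℂ] H)) (ξ : H) : Submodule ℂ H :=
  (Submodule.span ℂ (Set.range fun g : G => π g ξ)).topologicalClosure

/-- `ξ₁, …, ξ_k` (with `ξ i` a Parseval frame vector for `M i`) form a strongly disjoint
`k`-tuple: `{π(g)ξ₁ ⊕ ⋯ ⊕ π(g)ξ_k : g ∈ G}` is a Parseval frame for `M₁ ⊕ ⋯ ⊕ M_k`. -/
def StronglyDisjointTuple {k : ℕ} (π : G →* (H ≃ₗᵢ[ℂ] H)) (ξ : Fin k → H)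
    (M : Fin k → Submodule ℂ H) : Prop :=
  ∀ f : Fin k → H, (∀ i, f i ∈ M i) →
    ∑' g : G, ‖∑ i, ⟪f i, π g (ξ i)⟫‖ ^ 2 = ∑ i, ‖f i‖ ^ 2

/-- `T` belongs to the commutant `π(G)'`. -/
def InCommutant (π : G →* (H ≃ₗᵢ[ℂ] H)) (T : H →L[ℂ] H) : Prop :=
  ∀ (g : G) (x : H), T (π g x) = π g (T x)

/-- The closed subspace `closure {T ξ : T ∈ π(G)'}`. -/
def commOrbit (π : G →* (H ≃ₗᵢ[ℂ] H)) (ξ : H) : Submodule ℂ H :=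
  (Submodule.span ℂ {x : H | ∃ T : H →L[ℂ] H, InCommutant π T ∧ x = T ξ}).topologicalClosure

/-- `p` is the orthogonal projection of `H` onto the subspace `M`. -/
def IsOrthoProjOnto (M : Submodule ℂ H) (p : H →L[ℂ] H) : Prop :=
  ∀ x : H, p x ∈ M ∧ x - p x ∈ Mᗮ

/-- `ζ` is a Bessel vector for the representation `π`. -/
def IsBesselVector (π : G →* (H ≃ₗᵢ[ℂ] H)) (ζ : H) : Prop :=
  ∃ B : ℝ, 0 < B ∧ ∀ f : H, ∀ s : Finset G, ∑ g ∈ s, ‖⟪f, π g ζ⟫‖ ^ 2 ≤ B * ‖f‖ ^ 2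

/-- Strong disjointness of a Parseval frame vector `ξ` (for the subspace `M` of `H`, under `π`)
and `ζ` (for the subspace `M₂` of `H₂`, under `σ`), expressed by the vanishing of the mixed
sums `∑_g ⟨v, π(g)ξ⟩ conj ⟨w, σ(g)ζ⟩`. -/
def StronglyDisjointPairIn (π : G →* (H ≃ₗᵢ[ℂ] H)) {H₂ : Type*} [NormedAddCommGroup H₂]
    [InnerProductSpace ℂ H₂] (σ : G →* (H₂ ≃ₗᵢ[ℂ] H₂)) (ξ : H) (ζ : H₂)
    (M : Submodule ℂ H) (M₂ : Submodule ℂ H₂) : Prop :=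
  ∀ v ∈ M, ∀ w ∈ M₂, ∑' g : G, ⟪v, π g ξ⟫ * (starRingEnd ℂ) ⟪w, σ g ζ⟫ = 0

/-- A Riesz sequence: two-sided ℓ²-bounds on finite linear combinations. -/
def IsRieszSequence {J : Type*} (f : J → H) : Prop :=
  ∃ A B : ℝ, 0 < A ∧ 0 < B ∧ ∀ c : J →₀ ℂ,
    A * ∑ j ∈ c.support, ‖c j‖ ^ 2 ≤ ‖∑ j ∈ c.support, c j • f j‖ ^ 2 ∧
    ‖∑ j ∈ c.support, c j • f j‖ ^ 2 ≤ B * ∑ j ∈ c.support, ‖c j‖ ^ 2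

/-! Since `q` commutes with `π`, `∑ c h • π h (q η) = q (∑ c h • π h η)`, so the lower Riesz bound of
the `q η`-orbit passes through the bounded operator `q` to the `η`-orbit. The upper bound holds for
every Parseval frame vector: its analysis operator is an isometry, so its adjoint, the synthesis
operator, has norm at most `1`, also on any subfamily of the orbit. -/

-- Duality: test the analysis bound against `f = ∑ c j • v j` itself and apply Cauchy–Schwarz.
theorem norm_sum_smul_sq_le_of_sum_norm_inner_sq_le {J : Type*} (v : J → H) (s : Finset J)
    {B : ℝ} (hB : 0 ≤ B) (hv : ∀ f : H, ∑ j ∈ s, ‖⟪f, v j⟫‖ ^ 2 ≤ B * ‖f‖ ^ 2) (c : J → ℂ) :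
    ‖∑ j ∈ s, c j • v j‖ ^ 2 ≤ B * ∑ j ∈ s, ‖c j‖ ^ 2 := by
  set f := ∑ j ∈ s, c j • v j
  have hff : ‖f‖ ^ 2 ≤ ∑ j ∈ s, ‖c j‖ * ‖⟪f, v j⟫‖ :=
    calc ‖f‖ ^ 2 = ‖⟪f, f⟫‖ := (inner_self_eq_norm_sq f).symm.trans (inner_self_re_eq_norm f)
      _ = ‖∑ j ∈ s, c j * ⟪f, v j⟫‖ := by simp only [f, inner_sum, inner_smul_right]
      _ ≤ ∑ j ∈ s, ‖c j‖ * ‖⟪f, v j⟫‖ := (norm_sum_le _ _).trans_eq (by simp only [norm_mul])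
  have hcs : (‖f‖ ^ 2) ^ 2 ≤ (∑ j ∈ s, ‖c j‖ ^ 2) * (B * ‖f‖ ^ 2) :=
    calc (‖f‖ ^ 2) ^ 2 ≤ (∑ j ∈ s, ‖c j‖ * ‖⟪f, v j⟫‖) ^ 2 := by gcongr
      _ ≤ (∑ j ∈ s, ‖c j‖ ^ 2) * ∑ j ∈ s, ‖⟪f, v j⟫‖ ^ 2 := Finset.sum_mul_sq_le_sq_mul_sq _ _ _
      _ ≤ (∑ j ∈ s, ‖c j‖ ^ 2) * (B * ‖f‖ ^ 2) := by gcongr; exact hv f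
  have hS : 0 ≤ ∑ j ∈ s, ‖c j‖ ^ 2 := by positivity
  nlinarith [mul_nonneg hB hS, sq_nonneg ‖f‖]

theorem IsParsevalFrameVector.sum_norm_inner_sq_le {π : G →* (H ≃ₗᵢ[ℂ] H)} {η : H}
    (hη : IsParsevalFrameVector π η) (f : H) (t : Finset G) :
    ∑ g ∈ t, ‖⟪f, π g η⟫‖ ^ 2 ≤ ‖f‖ ^ 2 := by
  by_cases hsum : Summable fun g : G => ‖⟪f, π g η⟫‖ ^ 2
  · exact (hsum.sum_le_tsum t fun g _ => by positivity).trans_eq (hη f)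
  · -- the `tsum` in the frame identity is then the junk value `0`
    have hf : f = 0 := by
      simpa [tsum_eq_zero_of_not_summable hsum, eq_comm (a := (0 : ℝ))] using hη f
    simp [hf]

theorem IsParsevalFrameVector.isBesselVector {π : G →* (H ≃ₗᵢ[ℂ] H)} {η : H}
    (hη : IsParsevalFrameVector π η) : IsBesselVector π η :=
  ⟨1, one_pos, fun f s => by simpa using hη.sum_norm_inner_sq_le f s⟩

theorem IsBesselVector.norm_sum_smul_sq_le {π : G →* (H ≃ₗᵢ[ℂ] H)} {η : H}
    (hη : IsBesselVector π η) : ∃ B : ℝ, 0 < B ∧ ∀ {J : Type*} (ι : J → G),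
      Function.Injective ι → ∀ (s : Finset J) (c : J → ℂ),
        ‖∑ j ∈ s, c j • π (ι j) η‖ ^ 2 ≤ B * ∑ j ∈ s, ‖c j‖ ^ 2 := by
  classical
  obtain ⟨B, hB, hbessel⟩ := hη
  refine ⟨B, hB, fun ι hι s c => norm_sum_smul_sq_le_of_sum_norm_inner_sq_le _ s hB.le
    (fun f => ?_) c⟩
  simpa only [Finset.sum_image fun a _ b _ h => hι h] using hbessel f (s.image ι)

theorem IsRieszSequence.of_map {E : Type*} [NormedAddCommGroup E] [InnerProductSpace ℂ E]
    {J : Type*} {v : J → H} (T : H →L[ℂ] E)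
    (hT : IsRieszSequence fun j => T (v j)) {B : ℝ} (hB : 0 < B)
    (hv : ∀ c : J →₀ ℂ, ‖∑ j ∈ c.support, c j • v j‖ ^ 2 ≤ B * ∑ j ∈ c.support, ‖c j‖ ^ 2) :
    IsRieszSequence v := by
  obtain ⟨A, _, hA, _, hAT⟩ := hT
  -- `‖T‖ ^ 2 + 1` rather than `‖T‖ ^ 2`, which may vanish
  refine ⟨A / (‖T‖ ^ 2 + 1), B, by positivity, hB, fun c => ⟨?_, hv c⟩⟩
  set x := ∑ j ∈ c.support, c j • v j
  have hTx : ‖T x‖ ^ 2 ≤ (‖T‖ ^ 2 + 1) * ‖x‖ ^ 2 :=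
    calc ‖T x‖ ^ 2 ≤ (‖T‖ * ‖x‖) ^ 2 := by gcongr; exact T.le_opNorm x
      _ ≤ (‖T‖ ^ 2 + 1) * ‖x‖ ^ 2 := by nlinarith [sq_nonneg ‖x‖]
  have hlow : A * ∑ j ∈ c.support, ‖c j‖ ^ 2 ≤ ‖T x‖ ^ 2 := by
    simpa only [x, map_sum, map_smul] using (hAT c).1
  rw [div_mul_eq_mul_div, div_le_iff₀ (by positivity)]
  linarith

theorem stmt18_general {G : Type*} [Group G]
    {H : Type*} [NormedAddCommGroup H] [InnerProductSpace ℂ H]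
    (π : G →* (H ≃ₗᵢ[ℂ] H)) (K : Subgroup G) (η : H)
    (hη : IsParsevalFrameVector π η)
    (q : H →L[ℂ] H)
    (hqc : InCommutant π q)
    (hR : IsRieszSequence (fun h : K => π (h : G) (q η))) :
    IsRieszSequence (fun h : K => π (h : G) η) := by
  obtain ⟨B, hB, hsynth⟩ := hη.isBesselVector.norm_sum_smul_sq_le
  have hqR : IsRieszSequence fun h : K => q (π (h : G) η) := by
    rwa [funext fun h : K => hqc h η]
  exact hqR.of_map q hB fun c => hsynth _ Subtype.val_injective c.support c

theorem stmt18 {G : Type*} [Group G] [Countable G]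
    {H : Type*} [NormedAddCommGroup H] [InnerProductSpace ℂ H] [CompleteSpace H]
    (π : G →* (H ≃ₗᵢ[ℂ] H)) (K : Subgroup G) (η : H)
    (hη : IsParsevalFrameVector π η)
    (q : H →L[ℂ] H) (hq1 : IsSelfAdjoint q) (hq2 : q ∘L q = q)
    (hqc : InCommutant π q)
    (hR : IsRieszSequence (fun h : K => π (h : G) (q η))) :
    IsRieszSequence (fun h : K => π (h : G) η) :=
  stmt18_general π K η hη q hqc hR
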